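/- Let E, F be Banach lattices where F has property (d), and let 0 ≤ S ≤ T : E → F with T d-almost-limited. Then S is d-almost-limited. -/

import Mathlib

open Filter Topology Bornology

noncomputable section

/-- A set in a Banach lattice is disjoint if its elements are pairwise disjoint. -/
def DisjointSet {E : Type*} [NormedAddCommGroup E] [Lattice E] [HasSolidNorm E] [IsOrderedAddMonoid E] (D : Set E) : Prop :=
  ∀ x ∈ D, ∀ y ∈ D, x ≠ y → |x| ⊓ |y| = 0

/-- A sequence `f` in the dual of `Y` is weak*-null. -/
def WStarNull {Y : Type*} [NormedAddCommGroup Y] [NormedSpace ℝ Y]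
    (f : ℕ → StrongDual ℝ Y) : Prop :=
  ∀ y : Y, Tendsto (fun n => f n y) atTop (𝓝 0)

/-- The sequence `f` of functionals tends to `0` uniformly on `A`. -/
def UnifNull {Y : Type*} [NormedAddCommGroup Y] [NormedSpace ℝ Y]
    (f : ℕ → StrongDual ℝ Y) (A : Set Y) : Prop :=
  ∀ ε : ℝ, 0 < ε → ∃ N : ℕ, ∀ n ≥ N, ∀ y ∈ A, |f n y| ≤ ε

/-- The value of the modulus `|f|` at `x ≥ 0`, via the Riesz–Kantorovich formula. -/
def absApply {F : Type*} [NormedAddCommGroup F] [Lattice F] [HasSolidNorm F] [IsOrderedAddMonoid F] [NormedSpace ℝ F]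
    (f : StrongDual ℝ F) (x : F) : ℝ :=
  sSup ((fun y => f y) '' {y : F | |y| ≤ x})

/-- `g` is the modulus `|f|` of the functional `f`. -/
def IsAbsOf {F : Type*} [NormedAddCommGroup F] [Lattice F] [HasSolidNorm F] [IsOrderedAddMonoid F] [NormedSpace ℝ F]
    (g f : StrongDual ℝ F) : Prop :=
  ∀ x : F, 0 ≤ x → g x = absApply f x

/-- Two functionals on a Banach lattice are disjoint: `(|f| ⊓ |g|)(x) = 0` for each
`x ≥ 0`, via the Riesz–Kantorovich formula for the infimum. -/
def DualDisjoint {F : Type*} [NormedAddCommGroup F] [Lattice F] [HasSolidNorm F] [IsOrderedAddMonoid F] [NormedSpace ℝ F]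
    (f g : StrongDual ℝ F) : Prop :=
  ∀ x : F, 0 ≤ x → ∀ ε : ℝ, 0 < ε → ∃ y z : F, 0 ≤ y ∧ 0 ≤ z ∧ y + z = x ∧
    absApply f y + absApply g z < ε

/-- An almost limited subset of a Banach lattice: every disjoint weak*-null sequence of
functionals tends to `0` uniformly on it. -/
def AlmostLimitedSet {F : Type*} [NormedAddCommGroup F] [Lattice F] [HasSolidNorm F] [IsOrderedAddMonoid F] [NormedSpace ℝ F]
    (A : Set F) : Prop :=
  IsBounded A ∧ ∀ f : ℕ → StrongDual ℝ F, WStarNull f →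
    (∀ m n : ℕ, m ≠ n → DualDisjoint (f m) (f n)) → UnifNull f A

/-- `F` has property (d): `|fₙ| →w* 0` for every disjoint weak*-null sequence `(fₙ)`
in `F'`. -/
def PropertyD (F : Type*) [NormedAddCommGroup F] [Lattice F] [HasSolidNorm F] [IsOrderedAddMonoid F] [NormedSpace ℝ F] : Prop :=
  ∀ f : ℕ → StrongDual ℝ F, WStarNull f →
    (∀ m n : ℕ, m ≠ n → DualDisjoint (f m) (f n)) →
    ∀ g : ℕ → StrongDual ℝ F, (∀ n, IsAbsOf (g n) (f n)) → WStarNull g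

section Aux

open NormedSpace

variable {G : Type*} [NormedAddCommGroup G] [Lattice G] [HasSolidNorm G] [IsOrderedAddMonoid G] [NormedSpace ℝ G]

lemma absSet_nonempty (f : StrongDual ℝ G) {x : G} (hx : 0 ≤ x) :
    ((fun y => f y) '' {y : G | |y| ≤ x}).Nonempty :=
  ⟨f 0, 0, by simpa using hx, rfl⟩

lemma absSet_bddAbove (f : StrongDual ℝ G) {x : G} (hx : 0 ≤ x) :
    BddAbove ((fun y => f y) '' {y : G | |y| ≤ x}) := by
  refine ⟨‖f‖ * ‖x‖, ?_⟩
  rintro _ ⟨y, hy, rfl⟩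
  have h1 : ‖y‖ ≤ ‖x‖ := norm_le_norm_of_abs_le_abs (by rwa [abs_of_nonneg hx])
  calc f y ≤ |f y| := le_abs_self _
  _ = ‖f y‖ := (Real.norm_eq_abs _).symm
  _ ≤ ‖f‖ * ‖y‖ := f.le_opNorm y
  _ ≤ ‖f‖ * ‖x‖ := mul_le_mul_of_nonneg_left h1 (norm_nonneg f)

lemma le_absApply (f : StrongDual ℝ G) {x y : G} (hx : 0 ≤ x) (hy : |y| ≤ x) :
    f y ≤ absApply f x :=
  le_csSup (absSet_bddAbove f hx) ⟨y, hy, rfl⟩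

lemma absApply_nonneg' (f : StrongDual ℝ G) {x : G} (hx : 0 ≤ x) : 0 ≤ absApply f x := by
  simpa using le_absApply f hx (by simpa using hx : |(0 : G)| ≤ x)

lemma absApply_le (f : StrongDual ℝ G) {x : G} (hx : 0 ≤ x) {c : ℝ}
    (hc : ∀ y : G, |y| ≤ x → f y ≤ c) : absApply f x ≤ c :=
  csSup_le (absSet_nonempty f hx) (by rintro _ ⟨y, hy, rfl⟩; exact hc y hy)

lemma absApply_le_norm (f : StrongDual ℝ G) {x : G} (hx : 0 ≤ x) :
    absApply f x ≤ ‖f‖ * ‖x‖ :=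
  absApply_le f hx fun y hy => by
    have h1 : ‖y‖ ≤ ‖x‖ := norm_le_norm_of_abs_le_abs (by rwa [abs_of_nonneg hx])
    calc f y ≤ |f y| := le_abs_self _
    _ = ‖f y‖ := (Real.norm_eq_abs _).symm
    _ ≤ ‖f‖ * ‖y‖ := f.le_opNorm y
    _ ≤ ‖f‖ * ‖x‖ := mul_le_mul_of_nonneg_left h1 (norm_nonneg f)

lemma pos_dual_mono {g : StrongDual ℝ G} (hg : ∀ x : G, 0 ≤ x → 0 ≤ g x)
    {a b : G} (h : a ≤ b) : g a ≤ g b := by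
  have h2 := hg (b - a) (sub_nonneg.2 h)
  rw [map_sub] at h2
  linarith

lemma absApply_of_pos {g : StrongDual ℝ G} (hg : ∀ x : G, 0 ≤ x → 0 ≤ g x)
    {x : G} (hx : 0 ≤ x) : absApply g x = g x := by
  refine le_antisymm (absApply_le g hx fun y hy => ?_)
    (le_absApply g hx (by rw [abs_of_nonneg hx]))
  exact pos_dual_mono hg ((le_abs_self y).trans hy)

lemma absApply_zero (f : StrongDual ℝ G) : absApply f 0 = 0 := by
  refine le_antisymm (absApply_le f le_rfl fun y hy => ?_) (absApply_nonneg' f le_rfl)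
  have h0 : y = 0 := le_antisymm ((le_abs_self y).trans hy) (neg_nonpos.1 ((neg_le_abs y).trans hy))
  simp [h0]

lemma absApply_add (f : StrongDual ℝ G) {x y : G} (hx : 0 ≤ x) (hy : 0 ≤ y) :
    absApply f (x + y) = absApply f x + absApply f y := by
  have hxy : (0 : G) ≤ x + y := add_nonneg hx hy
  refine le_antisymm ?_ ?_
  · refine absApply_le f hxy fun w hw => ?_
    set u : G := (w ⊓ x) ⊔ (-x) with hu
    have hux : |u| ≤ x := by
      rw [abs_le']
      refine ⟨sup_le inf_le_right (neg_le_self hx), neg_le.mpr le_sup_right⟩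
    have hwy : w - y ≤ u := by
      refine le_trans (le_inf (sub_le_self w hy) ?_) le_sup_left
      rw [sub_le_iff_le_add]
      exact (le_abs_self w).trans hw
    have huw : u ≤ w + y := by
      refine sup_le (inf_le_left.trans (le_add_of_nonneg_right hy)) ?_
      have hnw : -(x + y) ≤ w := (neg_le_neg hw).trans (neg_le.2 (neg_le_abs w))
      calc -x = -(x + y) + y := by abel
      _ ≤ w + y := add_le_add_left hnw y
    have hvy : |w - u| ≤ y := by
      rw [abs_le']
      constructor
      · exact sub_le_comm.mpr hwy
      · rw [neg_sub, sub_le_iff_le_add, add_comm]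
        exact huw
    have hw' : w = u + (w - u) := by abel
    calc f w = f u + f (w - u) := by rw [← map_add, ← hw']
    _ ≤ absApply f x + absApply f y :=
        add_le_add (le_absApply f hx hux) (le_absApply f hy hvy)
  · have key : ∀ u : G, |u| ≤ x → ∀ v : G, |v| ≤ y →
        f u + f v ≤ absApply f (x + y) := by
      intro u hu v hv
      have habs : |u + v| ≤ x + y := (abs_add_le u v).trans (add_le_add hu hv)
      rw [← map_add]
      exact le_absApply f hxy habs
    have h1 : absApply f x ≤ absApply f (x + y) - absApply f y := by
      refine absApply_le f hx fun u hu => ?_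
      rw [le_sub_iff_add_le, add_comm, ← le_sub_iff_add_le]
      exact absApply_le f hy fun v hv => by linarith [key u hu v hv]
    linarith

/-- The bound for the modulus construction. -/
lemma modAux_bound (f : StrongDual ℝ G) (x : G) :
    |absApply f x⁺ - absApply f x⁻| ≤ ‖f‖ * ‖x‖ := by
  have hp : x⁺ ≤ |x| := by
    rw [posPart_def]
    exact sup_le (le_abs_self x) (abs_nonneg x)
  have hm : x⁻ ≤ |x| := by
    rw [negPart_def]
    exact sup_le (neg_le_abs x) (abs_nonneg x)
  have hpn : ‖x⁺‖ ≤ ‖x‖ := by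
    rw [← norm_abs_eq_norm x]
    exact norm_le_norm_of_abs_le_abs
      (by rw [abs_of_nonneg (posPart_nonneg x), abs_abs]; exact hp)
  have hmn : ‖x⁻‖ ≤ ‖x‖ := by
    rw [← norm_abs_eq_norm x]
    exact norm_le_norm_of_abs_le_abs
      (by rw [abs_of_nonneg (negPart_nonneg x), abs_abs]; exact hm)
  have h1 : absApply f x⁺ ≤ ‖f‖ * ‖x‖ :=
    (absApply_le_norm f (posPart_nonneg x)).trans
      (mul_le_mul_of_nonneg_left hpn (norm_nonneg f))
  have h2 : absApply f x⁻ ≤ ‖f‖ * ‖x‖ :=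
    (absApply_le_norm f (negPart_nonneg x)).trans
      (mul_le_mul_of_nonneg_left hmn (norm_nonneg f))
  have h3 : 0 ≤ absApply f x⁺ := absApply_nonneg' f (posPart_nonneg x)
  have h4 : 0 ≤ absApply f x⁻ := absApply_nonneg' f (negPart_nonneg x)
  rw [abs_le]
  constructor <;> linarith

/-- The modulus as an additive homomorphism, via `x ↦ |f|(x⁺) - |f|(x⁻)`. -/
def modAux (f : StrongDual ℝ G) : G →+ ℝ where
  toFun x := absApply f x⁺ - absApply f x⁻
  map_zero' := by simp [absApply_zero]
  map_add' a b := by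
    have h1 : (a + b)⁺ + (a⁻ + b⁻) = (a + b)⁻ + (a⁺ + b⁺) := by
      have e : ((a + b)⁺ + (a⁻ + b⁻)) - ((a + b)⁻ + (a⁺ + b⁺))
          = ((a + b)⁺ - (a + b)⁻) - ((a⁺ - a⁻) + (b⁺ - b⁻)) := by abel
      rw [posPart_sub_negPart, posPart_sub_negPart, posPart_sub_negPart] at e
      have e2 : ((a + b)⁺ + (a⁻ + b⁻)) - ((a + b)⁻ + (a⁺ + b⁺)) = 0 := by
        rw [e]; abel
      exact sub_eq_zero.1 e2
    have h2 := congrArg (absApply f) h1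
    rw [absApply_add f (posPart_nonneg _) (add_nonneg (negPart_nonneg a) (negPart_nonneg b)),
        absApply_add f (negPart_nonneg _) (add_nonneg (posPart_nonneg a) (posPart_nonneg b)),
        absApply_add f (negPart_nonneg a) (negPart_nonneg b),
        absApply_add f (posPart_nonneg a) (posPart_nonneg b)] at h2
    show absApply f (a + b)⁺ - absApply f (a + b)⁻ = absApply f a⁺ - absApply f a⁻ + (absApply f b⁺ - absApply f b⁻)
    linarith

/-- The modulus of a functional, as a continuous linear functional. -/
def modulus (f : StrongDual ℝ G) : StrongDual ℝ G :=
  (modAux f).toRealLinearMap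
    (AddMonoidHomClass.continuous_of_bound (modAux f) ‖f‖ fun x => by
      simpa [Real.norm_eq_abs, modAux] using modAux_bound f x)

lemma modulus_apply (f : StrongDual ℝ G) (x : G) :
    modulus f x = absApply f x⁺ - absApply f x⁻ := rfl

lemma modulus_isAbs (f : StrongDual ℝ G) : IsAbsOf (modulus f) f := by
  intro x hx
  rw [modulus_apply, posPart_eq_self.2 hx, negPart_eq_zero.2 hx, absApply_zero, sub_zero]

lemma modulus_pos (f : StrongDual ℝ G) : ∀ x : G, 0 ≤ x → 0 ≤ modulus f x := by
  intro x hx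
  rw [modulus_isAbs f x hx]
  exact absApply_nonneg' f hx

end Aux

/-- Domination for d-almost-limited operators: if `F` has property (d), `0 ≤ S ≤ T` and
`T` is d-almost-limited, then `S` is d-almost-limited. -/
theorem dAlmostLimited_of_dominated {E F : Type*}
    [NormedAddCommGroup E] [Lattice E] [HasSolidNorm E] [IsOrderedAddMonoid E] [NormedSpace ℝ E] [CompleteSpace E]
    [NormedAddCommGroup F] [Lattice F] [HasSolidNorm F] [IsOrderedAddMonoid F] [NormedSpace ℝ F] [CompleteSpace F]
    (hF : PropertyD F) (S T : E →L[ℝ] F)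
    (hS : ∀ x : E, 0 ≤ x → 0 ≤ S x)
    (hST : ∀ x : E, 0 ≤ x → S x ≤ T x)
    (hT : ∀ D : Set E, DisjointSet D → IsBounded D → AlmostLimitedSet (T '' D)) :
    ∀ D : Set E, DisjointSet D → IsBounded D → AlmostLimitedSet (S '' D) := by
  intro D hD hDb
  rw [isBounded_iff_forall_norm_le] at hDb
  obtain ⟨M, hM⟩ := hDb
  constructor
  · rw [isBounded_iff_forall_norm_le]
    refine ⟨‖S‖ * M, ?_⟩
    rintro _ ⟨x, hx, rfl⟩
    exact (S.le_opNorm x).trans (mul_le_mul_of_nonneg_left (hM x hx) (norm_nonneg S))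
  · intro f hf hdisj
    set D' : Set E := (fun x => |x|) '' D with hD'
    have hD'disj : DisjointSet D' := by
      rintro _ ⟨x, hx, rfl⟩ _ ⟨y, hy, rfl⟩ hne
      have hxy : x ≠ y := fun h => hne (by rw [h])
      rw [abs_abs, abs_abs]
      exact hD x hx y hy hxy
    have hD'b : IsBounded D' := by
      rw [isBounded_iff_forall_norm_le]
      refine ⟨M, ?_⟩
      rintro _ ⟨x, hx, rfl⟩
      rw [norm_abs_eq_norm]
      exact hM x hx
    obtain ⟨hTb, hTal⟩ := hT D' hD'disj hD'b
    set g : ℕ → StrongDual ℝ F := fun n => modulus (f n) with hg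
    have hgabs : ∀ n, IsAbsOf (g n) (f n) := fun n => modulus_isAbs (f n)
    have hgpos : ∀ n, ∀ x : F, 0 ≤ x → 0 ≤ g n x := fun n => modulus_pos (f n)
    have hgw : WStarNull g := hF f hf hdisj g hgabs
    have hgdisj : ∀ m n, m ≠ n → DualDisjoint (g m) (g n) := by
      intro m n hmn x hx ε hε
      obtain ⟨y, z, hy, hz, hyz, hlt⟩ := hdisj m n hmn x hx ε hε
      refine ⟨y, z, hy, hz, hyz, ?_⟩
      rwa [absApply_of_pos (hgpos m) hy, absApply_of_pos (hgpos n) hz,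
        hgabs m y hy, hgabs n z hz]
    have hunif := hTal g hgw hgdisj
    intro ε hε
    obtain ⟨N, hN⟩ := hunif ε hε
    refine ⟨N, fun n hn => ?_⟩
    rintro _ ⟨x, hx, rfl⟩
    have habsx : (0 : E) ≤ |x| := abs_nonneg x
    have h1 : |S x| ≤ T |x| := by
      have hplus := hS x⁺ (posPart_nonneg x)
      have hminus := hS x⁻ (negPart_nonneg x)
      have e : S x = S x⁺ - S x⁻ := by rw [← map_sub, posPart_sub_negPart]
      have h1a : |S x| ≤ S x⁺ + S x⁻ := by
        rw [e, sub_eq_add_neg]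
        calc |S x⁺ + -S x⁻| ≤ |S x⁺| + |-S x⁻| := abs_add_le _ _
        _ = S x⁺ + S x⁻ := by
            rw [abs_neg, abs_of_nonneg hplus, abs_of_nonneg hminus]
      have e2 : S x⁺ + S x⁻ = S |x| := by rw [← map_add, posPart_add_negPart]
      calc |S x| ≤ S x⁺ + S x⁻ := h1a
      _ = S |x| := e2
      _ ≤ T |x| := hST |x| habsx
    have hSabs : (0 : F) ≤ |S x| := abs_nonneg _
    have h2 : f n (S x) ≤ g n (T |x|) := by
      have h2a : f n (S x) ≤ absApply (f n) |S x| := le_absApply (f n) hSabs le_rfl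
      rw [← hgabs n _ hSabs] at h2a
      exact h2a.trans (pos_dual_mono (hgpos n) h1)
    have h2' : -(f n (S x)) ≤ g n (T |x|) := by
      have h2a : f n (-(S x)) ≤ absApply (f n) |S x| :=
        le_absApply (f n) hSabs (by rw [abs_neg])
      rw [map_neg, ← hgabs n _ hSabs] at h2a
      exact h2a.trans (pos_dual_mono (hgpos n) h1)
    have hmem : T |x| ∈ T '' D' := ⟨|x|, ⟨x, hx, rfl⟩, rfl⟩
    have h4 : g n (T |x|) ≤ ε := (le_abs_self _).trans (hN n hn (T |x|) hmem)
    rw [abs_le]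
    constructor <;> linarith
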